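/- For a two-qubit maximally entangled state ρ₀ = |Φ⟩⟨Φ| with |Φ⟩ = (|00⟩+|11⟩)/√2 subjected to amplitude damping noise on each qubit (ρ = (E⊗E)(ρ₀) with the single-qubit amplitude damping channel E of parameter ε ∈ [0,1]), the partial transpose ρ^{T_B} has eigenvalues (1+ε²)/2, (1−ε)²/2, (1−ε²)/2, and −(1−ε)²/2, so E_N(ρ) = log₂[1 + (1−ε)²]. -/

import Mathlib

open Matrix Kronecker
open scoped ComplexOrder

/-- Trace norm ‖A‖₁ = Tr √(AᴴA). -/
noncomputable def traceNorm {n : Type*} [Fintype n] [DecidableEq n]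
    (A : Matrix n n ℂ) : ℝ :=
  (((Matrix.posSemidef_conjTranspose_mul_self A).1.eigenvectorUnitary.1 *
      diagonal (((↑) : ℝ → ℂ) ∘ Real.sqrt ∘ (Matrix.posSemidef_conjTranspose_mul_self A).1.eigenvalues) *
      (star (Matrix.posSemidef_conjTranspose_mul_self A).1.eigenvectorUnitary : Matrix n n ℂ)).trace).re

/-- Partial transpose over the B factor. -/
def ptB {a b : Type*} (M : Matrix (a × b) (a × b) ℂ) : Matrix (a × b) (a × b) ℂ :=
  Matrix.of fun p q => M (p.1, q.2) (q.1, p.2)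

/-- The two-qubit Bell state |Φ⟩⟨Φ| with |Φ⟩ = (|00⟩+|11⟩)/√2. -/
noncomputable def bell : Matrix (Fin 2 × Fin 2) (Fin 2 × Fin 2) ℂ :=
  Matrix.of fun p q => if p.1 = p.2 ∧ q.1 = q.2 then (1 / 2 : ℂ) else 0

/-!
Amplitude damping maps the Bell state to an "X-state": in the basis |00⟩, |01⟩, |10⟩, |11⟩ its only
nonzero entries are the diagonal (a, c, c, b) and the coherence z between |00⟩ and |11⟩. The partial
transpose moves z to the coherence between |01⟩ and |10⟩, so it is block diagonal with blocks a, b and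
[[c, z], [z, c]], whose eigenvalues are a, b, c ± z. For a Hermitian matrix A the trace norm is
Tr |A| = Σ |λᵢ|, since √(AᴴA) = √(A²) = |A| in the functional calculus.
-/

open scoped MatrixOrder in
lemma traceNorm_eq_re_trace_abs {n : Type*} [Fintype n] [DecidableEq n] (A : Matrix n n ℂ) :
    traceNorm A = (CFC.abs A).trace.re := by
  have hA := posSemidef_conjTranspose_mul_self A
  rw [CFC.abs, star_eq_conjTranspose, CFC.sqrt_eq_real_sqrt _ hA.nonneg, cfcₙ_eq_cfc,
    hA.1.cfc_eq]
  rfl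

lemma Matrix.IsHermitian.trace_cfc {n : Type*} [Fintype n] [DecidableEq n] {A : Matrix n n ℂ}
    (hA : A.IsHermitian) (f : ℝ → ℝ) : (cfc f A).trace = ∑ i, (f (hA.eigenvalues i) : ℂ) := by
  rw [hA.cfc_eq, IsHermitian.cfc, Unitary.conjStarAlgAut_apply, trace_mul_cycle,
    Unitary.coe_star_mul_self, one_mul, trace_diagonal]
  rfl

open scoped MatrixOrder in
lemma traceNorm_eq_sum_abs_eigenvalues {n : Type*} [Fintype n] [DecidableEq n]
    {A : Matrix n n ℂ} (hA : A.IsHermitian) : traceNorm A = ∑ i, |hA.eigenvalues i| := by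
  rw [traceNorm_eq_re_trace_abs, CFC.abs_eq_cfc_norm A hA.isSelfAdjoint, hA.trace_cfc]
  simp [Complex.re_sum]

open Polynomial in
lemma Matrix.IsHermitian.eigenvalues_eq_of_charpoly {n : Type*} [Fintype n] [DecidableEq n]
    {A : Matrix n n ℂ} (hA : A.IsHermitian) {s : Multiset ℝ}
    (h : A.charpoly = (s.map fun μ : ℝ => X - C (μ : ℂ)).prod) :
    Finset.univ.val.map hA.eigenvalues = s := by
  apply Multiset.map_injective Complex.ofReal_injective
  have hroots := hA.roots_charpoly_eq_eigenvalues
  rw [h, ← Function.comp_def (fun a : ℂ => X - C a), ← Multiset.map_map,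
    roots_multiset_prod_X_sub_C] at hroots
  rw [hroots, Multiset.map_map]
  rfl

/-- The two-qubit X-state with ⟨00|ρ|00⟩ = a, ⟨11|ρ|11⟩ = b, ⟨01|ρ|01⟩ = ⟨10|ρ|10⟩ = c and
⟨00|ρ|11⟩ = ⟨11|ρ|00⟩ = z. -/
noncomputable def xState (a b c z : ℝ) : Matrix (Fin 2 × Fin 2) (Fin 2 × Fin 2) ℂ :=
  of fun p q => if p = q then !![(a : ℂ), c; c, b] p.1 p.2
    else if p.1 = p.2 ∧ q.1 = q.2 then (z : ℂ) else 0

noncomputable def xStatePtB (a b c z : ℝ) : Matrix (Fin 2 × Fin 2) (Fin 2 × Fin 2) ℂ :=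
  of fun p q => if p = q then !![(a : ℂ), c; c, b] p.1 p.2
    else if p.1 ≠ p.2 ∧ q.1 ≠ q.2 then (z : ℂ) else 0

lemma ptB_xState (a b c z : ℝ) : ptB (xState a b c z) = xStatePtB a b c z := by
  ext ⟨i, j⟩ ⟨k, l⟩
  fin_cases i <;> fin_cases j <;> fin_cases k <;> fin_cases l <;> rfl

lemma isHermitian_xStatePtB (a b c z : ℝ) : (xStatePtB a b c z).IsHermitian := by
  ext ⟨i, j⟩ ⟨k, l⟩
  fin_cases i <;> fin_cases j <;> fin_cases k <;> fin_cases l <;> simp [xStatePtB]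

lemma reindex_xStatePtB (a b c z : ℝ) :
    reindex finProdFinEquiv finProdFinEquiv (xStatePtB a b c z)
      = !![(a : ℂ), 0, 0, 0; 0, c, z, 0; 0, z, c, 0; 0, 0, 0, b] := by
  ext i j
  fin_cases i <;> fin_cases j <;> rfl

open Polynomial in
lemma charpoly_xStatePtB (a b c z : ℝ) :
    (xStatePtB a b c z).charpoly
      = (X - C (a : ℂ)) * (X - C (b : ℂ)) * (X - C ((c + z : ℝ) : ℂ))
          * (X - C ((c - z : ℝ) : ℂ)) := by
  rw [← charpoly_reindex finProdFinEquiv, reindex_xStatePtB, charpoly, det_succ_row_zero]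
  simp [Fin.sum_univ_succ, det_succ_row_zero, charmatrix_apply]
  ring

lemma eigenvalues_xStatePtB {a b c z : ℝ} (hA : (xStatePtB a b c z).IsHermitian) :
    Finset.univ.val.map hA.eigenvalues = {a, b, c + z, c - z} := by
  refine hA.eigenvalues_eq_of_charpoly ?_
  rw [charpoly_xStatePtB]
  simp [mul_assoc]

lemma traceNorm_xStatePtB (a b c z : ℝ) :
    traceNorm (xStatePtB a b c z) = |a| + |b| + |c + z| + |c - z| := by
  have hA := isHermitian_xStatePtB a b c z
  rw [traceNorm_eq_sum_abs_eigenvalues hA, Finset.sum_eq_multiset_sum,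
    ← Function.comp_def abs, ← Multiset.map_map, eigenvalues_xStatePtB]
  simp [add_assoc]

lemma sum_kraus_bell_eq_xState (u v : ℝ) (K : Fin 2 → Matrix (Fin 2) (Fin 2) ℂ)
    (hK0 : K 0 = !![1, 0; 0, (v : ℂ)]) (hK1 : K 1 = !![0, (u : ℂ); 0, 0]) :
    ∑ a : Fin 2, ∑ b : Fin 2, (K a ⊗ₖ K b) * bell * (K a ⊗ₖ K b)ᴴ
      = xState ((1 + (u ^ 2) ^ 2) / 2) ((v ^ 2) ^ 2 / 2) (u ^ 2 * v ^ 2 / 2) (v ^ 2 / 2) := by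
  ext ⟨i, j⟩ ⟨k, l⟩
  fin_cases i <;> fin_cases j <;> fin_cases k <;> fin_cases l <;>
    simp [hK0, hK1, bell, xState, mul_apply, kroneckerMap_apply, Fintype.sum_prod_type] <;> ring

/-- for the Bell state under amplitude damping on each qubit,
ρ = (E⊗E)(|Φ⟩⟨Φ|), the partial transpose ρ^{T_B} has eigenvalues (1+ε²)/2, (1−ε)²/2,
(1−ε²)/2 and −(1−ε)²/2, so E_N(ρ) = log₂[1 + (1−ε)²]. -/
theorem bell_amplitude_damping_negativity (ε : ℝ) (hε0 : 0 ≤ ε) (hε1 : ε ≤ 1)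
    (K : Fin 2 → Matrix (Fin 2) (Fin 2) ℂ)
    (hK0 : K 0 = !![1, 0; 0, ((Real.sqrt (1 - ε) : ℝ) : ℂ)])
    (hK1 : K 1 = !![0, ((Real.sqrt ε : ℝ) : ℂ); 0, 0])
    (ρ : Matrix (Fin 2 × Fin 2) (Fin 2 × Fin 2) ℂ)
    (hρ : ρ = ∑ a : Fin 2, ∑ b : Fin 2,
        (K a ⊗ₖ K b) * bell * (K a ⊗ₖ K b)ᴴ) :
    ∃ hH : (ptB ρ).IsHermitian,
      (Finset.univ.val.map hH.eigenvalues : Multiset ℝ)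
          = {(1 + ε ^ 2) / 2, (1 - ε) ^ 2 / 2, (1 - ε ^ 2) / 2, -((1 - ε) ^ 2 / 2)}
        ∧ Real.logb 2 (traceNorm (ptB ρ)) = Real.logb 2 (1 + (1 - ε) ^ 2) := by
  obtain rfl : ρ = xState ((1 + ε ^ 2) / 2) ((1 - ε) ^ 2 / 2) (ε * (1 - ε) / 2) ((1 - ε) / 2) := by
    rw [hρ, sum_kraus_bell_eq_xState _ _ K hK0 hK1, Real.sq_sqrt hε0,
      Real.sq_sqrt (sub_nonneg.mpr hε1)]
  have hplus : ε * (1 - ε) / 2 + (1 - ε) / 2 = (1 - ε ^ 2) / 2 := by ring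
  have hminus : ε * (1 - ε) / 2 - (1 - ε) / 2 = -((1 - ε) ^ 2 / 2) := by ring
  rw [ptB_xState]
  refine ⟨isHermitian_xStatePtB _ _ _ _, by rw [eigenvalues_xStatePtB, hplus, hminus], ?_⟩
  have h1ε2 : 0 ≤ 1 - ε ^ 2 := by nlinarith
  rw [traceNorm_xStatePtB, hplus, hminus, abs_neg,
    abs_of_nonneg (by positivity : 0 ≤ (1 + ε ^ 2) / 2),
    abs_of_nonneg (by positivity : 0 ≤ (1 - ε) ^ 2 / 2),
    abs_of_nonneg (div_nonneg h1ε2 zero_le_two)]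
  congr 1
  ring
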